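/- Conservation of mass for the truncated Hermite–Vlasov–Poisson system: if (C_0,…,C_{N_H−1}, E, Φ) is a solution of the truncated Hermite–Vlasov–Poisson system, then the function t ↦ ∫_0^L C_0(t,x) dx is constant in t (equivalently, d/dt ∫_0^L C_0(t,x) dx = 0 for all t ≥ 0); hence the total mass v_th ∫_0^L C_0(t,x) dx is conserved. -/

import Mathlib

/-!
The `n = 0` equation of the hierarchy is the continuity equation `∂ₜC₀ + ∂ₓ(v_th C₁) = 0`: the
field term carries the factor `√0`. By the fundamental theorem of calculus in `t` and Fubini, the
change of `∫₀ᴸ C₀` between two times is the time integral of `-∫₀ᴸ ∂ₓ(v_th C₁)`, which vanishes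
because `C₁` is `L`-periodic.
-/

open MeasureTheory intervalIntegral Function Set

section PartialDerivatives

variable {f : ℝ → ℝ → ℝ}

theorem hasDerivAt_uncurry_left (hf : Differentiable ℝ (uncurry f)) (t x : ℝ) :
    HasDerivAt (fun s => f s x) (fderiv ℝ (uncurry f) (t, x) (1, 0)) t := by
  have h := (hf (t, x)).hasFDerivAt.comp_hasDerivAt t
    ((hasDerivAt_id t).prodMk (hasDerivAt_const t x))
  exact h

theorem hasDerivAt_uncurry_right (hf : Differentiable ℝ (uncurry f)) (t x : ℝ) :
    HasDerivAt (f t) (fderiv ℝ (uncurry f) (t, x) (0, 1)) x := by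
  have h := (hf (t, x)).hasFDerivAt.comp_hasDerivAt x
    ((hasDerivAt_const x t).prodMk (hasDerivAt_id x))
  exact h

theorem continuous_deriv_left (hf : ContDiff ℝ 1 (uncurry f)) :
    Continuous fun p : ℝ × ℝ => deriv (fun s => f s p.2) p.1 := by
  have hdiff : Differentiable ℝ (uncurry f) := hf.differentiable one_ne_zero
  simp_rw [fun p : ℝ × ℝ => (hasDerivAt_uncurry_left hdiff p.1 p.2).deriv]
  exact (hf.continuous_fderiv one_ne_zero).clm_apply continuous_const

end PartialDerivatives

theorem Function.Periodic.integral_deriv_eq_zero {g : ℝ → ℝ} {L : ℝ} (hg : ContDiff ℝ 1 g)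
    (hper : Periodic g L) (a : ℝ) : ∫ x in a..a + L, deriv g x = 0 := by
  rw [integral_deriv_eq_sub (fun x _ => (hg.differentiable one_ne_zero) x)
    ((hg.continuous_deriv le_rfl).intervalIntegrable _ _), hper, sub_self]

theorem intervalIntegral_intervalIntegral_swap_of_continuous {F : ℝ → ℝ → ℝ}
    (hF : Continuous (uncurry F)) (a b c d : ℝ) :
    ∫ x in a..b, ∫ y in c..d, F x y = ∫ y in c..d, ∫ x in a..b, F x y :=
  intervalIntegral_intervalIntegral_swap <|
    (hF.continuousOn.integrableOn_compact (isCompact_uIcc.prod isCompact_uIcc)).mono_set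
      (prod_mono uIoc_subset_uIcc uIoc_subset_uIcc)

theorem integral_sub_integral_eq_integral_integral_deriv {f : ℝ → ℝ → ℝ}
    (hf : ContDiff ℝ 1 (uncurry f)) (a b t₀ t : ℝ) :
    (∫ x in a..b, f t x) - ∫ x in a..b, f t₀ x
      = ∫ s in t₀..t, ∫ x in a..b, deriv (fun s => f s x) s := by
  have hdiff : Differentiable ℝ (uncurry f) := hf.differentiable one_ne_zero
  have hslice : ∀ s, IntervalIntegrable (f s) volume a b := fun s =>
    (hf.continuous.comp (continuous_const.prodMk continuous_id)).intervalIntegrable _ _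
  have hderiv := continuous_deriv_left hf
  have hftc : ∀ x, f t x - f t₀ x = ∫ s in t₀..t, deriv (fun s => f s x) s := fun x =>
    (integral_deriv_eq_sub (fun s _ => (hasDerivAt_uncurry_left hdiff s x).differentiableAt)
      ((hderiv.comp (continuous_id.prodMk continuous_const)).intervalIntegrable _ _)).symm
  rw [← integral_sub (hslice t) (hslice t₀)]
  simp_rw [hftc]
  exact intervalIntegral_intervalIntegral_swap_of_continuous
    (F := fun x s => deriv (fun s => f s x) s)
    (hderiv.comp (continuous_snd.prodMk continuous_fst)) a b t₀ t

theorem integral_eq_of_continuity_equation {ρ J : ℝ → ℝ → ℝ} {L : ℝ}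
    (hρ : ContDiff ℝ 1 (uncurry ρ)) (hJ : ContDiff ℝ 1 (uncurry J))
    (hJper : ∀ t, Periodic (J t) L) (hcont : ∀ t x, deriv (fun s => ρ s x) t + deriv (J t) x = 0)
    (t₀ t : ℝ) : ∫ x in 0..L, ρ t x = ∫ x in 0..L, ρ t₀ x := by
  have hflux : ∀ s, ∫ x in 0..L, deriv (J s) x = 0 := fun s => by
    have hJs : ContDiff ℝ 1 (J s) := hJ.comp (contDiff_const.prodMk contDiff_id)
    simpa using (hJper s).integral_deriv_eq_zero hJs 0
  rw [← sub_eq_zero, integral_sub_integral_eq_integral_integral_deriv hρ]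
  calc ∫ s in t₀..t, ∫ x in 0..L, deriv (fun s => ρ s x) s
      = ∫ s in t₀..t, -∫ x in 0..L, deriv (J s) x := by
        simp_rw [← intervalIntegral.integral_neg,
          fun s x => eq_neg_of_add_eq_zero_left (hcont s x)]
    _ = 0 := by simp [hflux]

theorem truncated_hermite_vlasov_poisson_mass_conservation
    (L vth : ℝ) (NH : ℕ) (hNH : 3 ≤ NH)
    (C : ℕ → ℝ → ℝ → ℝ) (E : ℝ → ℝ → ℝ)
    -- regularity: each `C n` and `E` are C¹ in (t,x), `Φ` is C¹ and C² in x
    (hC1 : ∀ n, ContDiff ℝ 1 (fun p : ℝ × ℝ => C n p.1 p.2))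
    -- L-periodicity in space
    (hCper : ∀ n t, Function.Periodic (fun x => C n t x) L)
    -- the truncated Hermite expansion of the Vlasov equation
    -- (the `n = 0` case of `C (n-1)` is irrelevant since `√0 = 0`)
    (hVlasov : ∀ n, n < NH → ∀ t x,
      deriv (fun s => C n s x) t
        + vth * (Real.sqrt (n + 1) * deriv (fun y => C (n + 1) t y) x
            + Real.sqrt n * deriv (fun y => C (n - 1) t y) x)
        - (Real.sqrt n / vth) * E t x * C (n - 1) t x = 0) :
    ∀ t, 0 ≤ t →
      vth * ∫ x in (0:ℝ)..L, C 0 t x = vth * ∫ x in (0:ℝ)..L, C 0 0 x := by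
  intro t _
  have hflux : ContDiff ℝ 1 (uncurry fun s y => vth * C 1 s y) := contDiff_const.mul (hC1 1)
  have hcontinuity : ∀ s x,
      deriv (fun s => C 0 s x) s + deriv (fun y => vth * C 1 s y) x = 0 := fun s x => by
    have h0 := hVlasov 0 (by omega) s x
    have hC1x := hasDerivAt_uncurry_right ((hC1 1).differentiable one_ne_zero) s x
    rw [deriv_const_mul _ hC1x.differentiableAt]
    simpa using h0
  have hfluxper : ∀ s, Periodic (fun y => vth * C 1 s y) L := fun s x =>
    congrArg (vth * ·) (hCper 1 s x)
  rw [integral_eq_of_continuity_equation (hC1 0) hflux hfluxper hcontinuity 0 t]
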